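/- arXiv:1904.12068 — 7 statements merged into one kernel-verified Lean document; each statement's English description precedes it below -/
import Mathlib

section
/- In an LSM tree where records can only move from lower-indexed levels to higher-indexed levels during merges, and all new writes enter at level 0 with strictly increasing timestamps, any two records with the same data key residing at different levels satisfy: the record at the lower-indexed level has a strictly larger timestamp than the record at the higher-indexed level. -/
/-! The invariant "every record is newer than every record on a deeper level" is preserved by each
step: a write adds the newest record at level 0, and a merge relocates records along the monotone
level map `l ↦ if l = i then i + 1 else l`, which never reverses the order of two distinct levels. -/

/-- A record: (key, value, timestamp). -/
abbrev LSMRecord := ℕ × ℕ × ℕ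

/-- An LSM state: for each level index, a finite multiset of records. -/
abbrev LSMState := ℕ → Multiset LSMRecord

/-- One step of the LSM state machine: either a write of a fresh record into
level 0 (with a timestamp strictly larger than every timestamp currently in
the tree), or a merge of two adjacent levels into the higher-indexed one. -/
inductive LSMStep : LSMState → LSMState → Prop
  | write (s : LSMState) (r : LSMRecord)
      (hfresh : ∀ i, ∀ r' ∈ s i, r'.2.2 < r.2.2) :
      LSMStep s (fun j => if j = 0 then r ::ₘ s 0 else s j)
  | merge (s : LSMState) (i : ℕ) :
      LSMStep s (fun j => if j = i then 0
                  else if j = i + 1 then s i + s (i + 1) else s j)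

/-- Reachability from the empty initial state. -/
def LSMReachable (s : LSMState) : Prop :=
  Relation.ReflTransGen LSMStep (fun _ => (0 : Multiset LSMRecord)) s

def LowerLevelsNewer (s : LSMState) : Prop :=
  ∀ i j, i < j → ∀ r ∈ s i, ∀ r' ∈ s j, r'.2.2 < r.2.2

namespace LowerLevelsNewer

theorem empty : LowerLevelsNewer fun _ => 0 := by
  intro i j _ r hr
  simp at hr

theorem of_relocate {s t : LSMState} (hs : LowerLevelsNewer s) (f : ℕ → ℕ) (hf : Monotone f)
    (ht : ∀ j, ∀ r ∈ t j, ∃ l, f l = j ∧ r ∈ s l) : LowerLevelsNewer t := by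
  intro i j hij r hr r' hr'
  obtain ⟨a, rfl, ha⟩ := ht i r hr
  obtain ⟨b, rfl, hb⟩ := ht j r' hr'
  exact hs a b (hf.reflect_lt hij) r ha r' hb

theorem merge {s : LSMState} (hs : LowerLevelsNewer s) (i : ℕ) :
    LowerLevelsNewer fun j => if j = i then 0
      else if j = i + 1 then s i + s (i + 1) else s j := by
  refine hs.of_relocate (fun l => if l = i then i + 1 else l) ?_ ?_
  · intro a b hab
    dsimp only
    split_ifs <;> omega
  · intro j r hr
    split_ifs at hr with hji hji1
    · simp at hr
    · rcases Multiset.mem_add.mp hr with h | h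
      · exact ⟨i, by simp [hji1], h⟩
      · exact ⟨i + 1, by simp [hji1], h⟩
    · exact ⟨j, by simp [hji], hr⟩

theorem write {s : LSMState} (hs : LowerLevelsNewer s) (r : LSMRecord)
    (hfresh : ∀ i, ∀ r' ∈ s i, r'.2.2 < r.2.2) :
    LowerLevelsNewer fun j => if j = 0 then r ::ₘ s 0 else s j := by
  intro i j hij r₁ hr₁ r₂ hr₂
  dsimp only at hr₁ hr₂
  rw [if_neg (by omega)] at hr₂
  split_ifs at hr₁ with hi
  · subst hi
    rcases Multiset.mem_cons.mp hr₁ with rfl | h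
    · exact hfresh j r₂ hr₂
    · exact hs 0 j hij r₁ h r₂ hr₂
  · exact hs i j hij r₁ hr₁ r₂ hr₂

theorem step {s t : LSMState} (hs : LowerLevelsNewer s) (hst : LSMStep s t) :
    LowerLevelsNewer t := by
  cases hst with
  | write r hfresh => exact hs.write r hfresh
  | merge i => exact hs.merge i

end LowerLevelsNewer

theorem LSMReachable.lowerLevelsNewer {s : LSMState} (hs : LSMReachable s) :
    LowerLevelsNewer s := by
  induction hs with
  | refl => exact LowerLevelsNewer.empty
  | tail _ hstep ih => exact ih.step hstep

theorem lsm_cross_level_freshness_general (s : LSMState) (hs : LSMReachable s)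
    (i j : ℕ) (hij : i < j) (r r' : LSMRecord)
    (hr : r ∈ s i) (hr' : r' ∈ s j) :
    r'.2.2 < r.2.2 :=
  hs.lowerLevelsNewer i j hij r hr r' hr'

/-- In any reachable LSM state, for two records with the same key at different
levels, the record at the lower-indexed level has a strictly larger timestamp. -/
theorem lsm_cross_level_freshness (s : LSMState) (hs : LSMReachable s)
    (i j : ℕ) (hij : i < j) (r r' : LSMRecord)
    (hr : r ∈ s i) (hr' : r' ∈ s j) (hkey : r.1 = r'.1) :
    r'.2.2 < r.2.2 :=
  lsm_cross_level_freshness_general s hs i j hij r r' hr hr'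
end

section
/- In a Merkle tree built over a list of leaves with a collision-resistant hash, if two leaf lists of the same shape yield the same root hash, then the leaf lists are equal or a hash collision can be extracted. -/
def HashCollision {α : Type*} (H : α → α) : Prop :=
  ∃ x y, x ≠ y ∧ H x = H y

/-- Root digest of a complete binary Merkle tree of depth `d` over a list of
`2^d` leaves: a leaf is digested as `H leaf`, an internal node as the hash of
the concatenation of its children's digests. -/
def merkleRoot {α : Type*} [Inhabited α] (H : α → α) (pair : α → α → α) :
    ℕ → List α → α
  | 0, l => H (l.headD default)
  | d + 1, l => H (pair (merkleRoot H pair d (l.take (2 ^ d)))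
                        (merkleRoot H pair d (l.drop (2 ^ d))))

/-- Merkle-tree binding: two leaf lists of the same shape (length `2^d`) with
equal root hashes are equal, or a hash collision can be extracted. -/
theorem merkle_root_binding {α : Type*} [Inhabited α]
    (H : α → α) (pair : α → α → α) (hpair : Function.Injective2 pair)
    (d : ℕ) (l l' : List α)
    (hl : l.length = 2 ^ d) (hl' : l'.length = 2 ^ d)
    (heq : merkleRoot H pair d l = merkleRoot H pair d l') :
    l = l' ∨ HashCollision H := by
  induction d generalizing l l' with
  | zero =>
    simp only [pow_zero, List.length_eq_one_iff] at hl hl'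
    obtain ⟨a, rfl⟩ := hl
    obtain ⟨b, rfl⟩ := hl'
    simp only [merkleRoot, List.headD] at heq
    by_cases hab : a = b
    · exact Or.inl (by rw [hab])
    · exact Or.inr ⟨a, b, hab, heq⟩
  | succ d ih =>
    simp only [merkleRoot] at heq
    by_cases hp : pair (merkleRoot H pair d (l.take (2 ^ d)))
        (merkleRoot H pair d (l.drop (2 ^ d))) =
        pair (merkleRoot H pair d (l'.take (2 ^ d)))
        (merkleRoot H pair d (l'.drop (2 ^ d)))
    · obtain ⟨h1, h2⟩ := hpair hp
      have hlen1 : (l.take (2 ^ d)).length = 2 ^ d := by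
        rw [List.length_take, hl, pow_succ]; omega
      have hlen2 : (l.drop (2 ^ d)).length = 2 ^ d := by
        rw [List.length_drop, hl, pow_succ]; omega
      have hlen1' : (l'.take (2 ^ d)).length = 2 ^ d := by
        rw [List.length_take, hl', pow_succ]; omega
      have hlen2' : (l'.drop (2 ^ d)).length = 2 ^ d := by
        rw [List.length_drop, hl', pow_succ]; omega
      rcases ih _ _ hlen1 hlen1' h1 with ht | hc
      · rcases ih _ _ hlen2 hlen2' h2 with hd | hc
        · left
          rw [← List.take_append_drop (2 ^ d) l, ← List.take_append_drop (2 ^ d) l',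
            ht, hd]
        · exact Or.inr hc
      · exact Or.inr hc
    · exact Or.inr ⟨_, _, hp, heq⟩
end

section
/- Given a Merkle tree of depth d and a valid authentication path for position i verifying leaf value v against root r, if the honest tree built from leaves l_0, ..., l_{2^d - 1} has root r and l_i ≠ v, then a collision for H can be extracted from the two computations. -/
/-- Recompute the root from a current digest `h`, a position `i` (whose binary
expansion, least-significant bit first, selects left/right), and a list of
sibling digests, hashing upward. -/
def pathRoot {α : Type*} (H : α → α) (pair : α → α → α) :
    α → ℕ → List α → α
  | h, _, [] => h
  | h, i, s :: rest =>
      pathRoot H pair (if i % 2 = 1 then H (pair s h) else H (pair h s))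
        (i / 2) rest

/-- Verify the authentication path for claimed leaf value `v` at position `i`. -/
def verifyPath {α : Type*} (H : α → α) (pair : α → α → α)
    (v : α) (i : ℕ) (sibs : List α) : α :=
  pathRoot H pair (H v) i sibs

/-!
A Merkle root is computed by nested applications of the injective map `(a, b) ↦ H (pair a b)`.
If `H` had no collisions this map would be injective, so an equality between the root
recomputed from an authentication path and the honest root could be peeled off one level at
a time, from the top of the tree down, until it forces `H v = H lᵢ` and hence `v = lᵢ`.
-/

section

variable {α : Type*} (H : α → α) (pair : α → α → α)

lemma hashCollision_iff_not_injective : HashCollision H ↔ ¬ Function.Injective H := by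
  simp only [HashCollision, Function.Injective]
  grind

lemma pathRoot_append (a b : List α) (h : α) (i : ℕ) :
    pathRoot H pair h i (a ++ b)
      = pathRoot H pair (pathRoot H pair h i a) (i / 2 ^ a.length) b := by
  induction a generalizing h i with
  | nil => simp [pathRoot]
  | cons s rest ih =>
    rw [List.cons_append, pathRoot, pathRoot, ih, Nat.div_div_eq_div_mul, ← pow_succ',
      List.length_cons]

lemma pathRoot_mod_two_pow_length (sibs : List α) (h : α) (i : ℕ) :
    pathRoot H pair h (i % 2 ^ sibs.length) sibs = pathRoot H pair h i sibs := by
  induction sibs generalizing h i with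
  | nil => rfl
  | cons s rest ih =>
    have hpow : 2 ^ (rest.length + 1) = 2 * 2 ^ rest.length := pow_succ' 2 _
    rw [List.length_cons, pathRoot, pathRoot, hpow, Nat.mod_mul_right_mod,
      Nat.mod_mul_right_div_self, ih]

theorem eq_of_pathRoot_eq_merkleRoot [Inhabited α] (hH : Function.Injective H)
    (hpair : Function.Injective2 pair) (h : α) (sibs : List α) (i : ℕ)
    (hi : i < 2 ^ sibs.length) (leaves : List α)
    (hroot : pathRoot H pair h i sibs = merkleRoot H pair sibs.length leaves) :
    h = H (leaves.getD i default) := by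
  induction sibs using List.reverseRecOn generalizing i leaves with
  | nil =>
    obtain rfl : i = 0 := by simpa using hi
    cases leaves <;> exact hroot
  | append_singleton lower s ih =>
    rw [pathRoot_append, List.length_append, List.length_singleton, merkleRoot] at hroot
    rcases lt_or_ge i (2 ^ lower.length) with hleft | hright
    · rw [Nat.div_eq_of_lt hleft] at hroot
      have hsub := (hpair (hH hroot)).1
      rw [ih i hleft _ hsub]
      simp [hleft]
    · obtain ⟨j, rfl⟩ := Nat.exists_eq_add_of_le hright
      have hj : j < 2 ^ lower.length := by
        rw [List.length_append, List.length_singleton, pow_succ] at hi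
        omega
      rw [Nat.add_div_left _ (by positivity), Nat.div_eq_of_lt hj] at hroot
      have hsub := (hpair (hH hroot)).2
      rw [← pathRoot_mod_two_pow_length, Nat.add_mod_left, Nat.mod_eq_of_lt hj] at hsub
      rw [ih j hj _ hsub]
      simp

end

theorem merkle_path_soundness_general {α : Type*} [Inhabited α]
    (H : α → α) (pair : α → α → α) (hpair : Function.Injective2 pair)
    (d : ℕ) (leaves : List α)
    (i : ℕ) (hi : i < 2 ^ d) (v : α) (sibs : List α) (hsibs : sibs.length = d)
    (hver : verifyPath H pair v i sibs = merkleRoot H pair d leaves)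
    (hwrong : leaves.getD i default ≠ v) :
    HashCollision H := by
  subst hsibs
  rw [hashCollision_iff_not_injective]
  intro hH
  have hleaf := eq_of_pathRoot_eq_merkleRoot H pair hH hpair (H v) sibs i hi leaves hver
  exact hwrong (hH hleaf).symm

/-- Soundness of Merkle authentication paths: if a path of length `d` for
position `i` verifies leaf value `v` against the root of the honest tree built
from `leaves`, but the honest leaf at position `i` differs from `v`, then a
hash collision can be extracted. -/
theorem merkle_path_soundness {α : Type*} [Inhabited α]
    (H : α → α) (pair : α → α → α) (hpair : Function.Injective2 pair)
    (d : ℕ) (leaves : List α) (hlen : leaves.length = 2 ^ d)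
    (i : ℕ) (hi : i < 2 ^ d) (v : α) (sibs : List α) (hsibs : sibs.length = d)
    (hver : verifyPath H pair v i sibs = merkleRoot H pair d leaves)
    (hwrong : leaves.getD i default ≠ v) :
    HashCollision H :=
  merkle_path_soundness_general H pair hpair d leaves i hi v sibs hsibs hver hwrong
end

section
/- The compaction operation preserves the early-stop read invariant: if before merging levels L_i and L_{i+1} every pair of same-key records across any two levels satisfies 'lower level index implies larger timestamp', then after replacing L_i and L_{i+1} by the empty level and their merged union at index i+1, the invariant still holds. -/
abbrev Rec := ℕ × ℕ × ℕ

/-- Levels of the LSM tree: a finite multiset of records per level index. -/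
abbrev Levels := ℕ → Multiset Rec

/-- The cross-level early-stop read invariant: same-key records at a
lower-indexed level have strictly larger timestamps. -/
def CrossInv (s : Levels) : Prop :=
  ∀ i j, i < j → ∀ r ∈ s i, ∀ r' ∈ s j, r.1 = r'.1 → r'.2.2 < r.2.2

/-- Compaction of levels `i` and `i+1`: level `i` becomes empty and level
`i+1` becomes the multiset union of the old levels `i` and `i+1`. -/
def compaction (i : ℕ) (s : Levels) : Levels := fun j =>
  if j = i then 0 else if j = i + 1 then s i + s (i + 1) else s j

def compactionTarget (i k : ℕ) : ℕ :=
  if k = i then i + 1 else k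

/-- A monotone `f` reflects `<`, so records that end up on levels `f k < f k'` came from
levels `k < k'`. -/
theorem CrossInv.of_monotone {s t : Levels} (h : CrossInv s) (f : ℕ → ℕ) (hf : Monotone f)
    (ht : ∀ j, ∀ r ∈ t j, ∃ k, f k = j ∧ r ∈ s k) : CrossInv t := by
  intro a b hab r hr r' hr' hkey
  obtain ⟨k, rfl, hk⟩ := ht a r hr
  obtain ⟨k', rfl, hk'⟩ := ht b r' hr'
  exact h k k' (hf.reflect_lt hab) r hk r' hk' hkey

theorem monotone_compactionTarget (i : ℕ) : Monotone (compactionTarget i) := by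
  intro k k' hkk'
  unfold compactionTarget
  split_ifs <;> omega

theorem exists_mem_of_mem_compaction {i j : ℕ} {s : Levels} {r : Rec}
    (hr : r ∈ compaction i s j) : ∃ k, compactionTarget i k = j ∧ r ∈ s k := by
  unfold compaction at hr
  split_ifs at hr with hji hjs
  · simp at hr
  · rcases Multiset.mem_add.mp hr with hr | hr
    · exact ⟨i, by simp [compactionTarget, hjs], hr⟩
    · exact ⟨i + 1, by simp [compactionTarget, hjs], hr⟩
  · exact ⟨j, if_neg hji, hr⟩

/-- Compaction preserves the early-stop read invariant. -/
theorem compaction_preserves_invariant (s : Levels) (i : ℕ)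
    (h : CrossInv s) : CrossInv (compaction i s) :=
  h.of_monotone (compactionTarget i) (monotone_compactionTarget i)
    fun _ _ hr => exists_mem_of_mem_compaction hr
end

section
/- If each level contains records of the same key chained so that the chain head is the record with the maximum timestamp among same-key records in that level, then verifying the level-i membership proof for record r forces r to be the maximum-timestamp record of key k at level i, or the verifier directly observes a fresher same-key record inside the proof. -/
section
variable {α : Type*} [Inhabited α]

/-- Digest of the hash chain of same-key records `r₁, r₂, ...` (newest
first): `H(enc r₁ ‖ H(enc r₂ ‖ ...))`, with `H(enc r)` for a singleton. -/
def chainHash (H : α → α) (pair : α → α → α) (enc : Rec → α) :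
    List Rec → α
  | [] => H default
  | [r] => H (enc r)
  | r :: rest => H (pair (enc r) (chainHash H pair enc rest))

/-- The leaf digest recomputed by the verifier from the claimed record `r` and
an optional tail digest supplied by the prover. -/
def leafOf (H : α → α) (pair : α → α → α) (enc : Rec → α)
    (r : Rec) (t : Option α) : α :=
  match t with
  | none => H (enc r)
  | some td => H (pair (enc r) td)

/-- Recompute the chain digest from the records `pre` included in the proof
above `r` (the newer ones), `r` itself, and the optional tail digest. -/
def verifyChain (H : α → α) (pair : α → α → α) (enc : Rec → α)
    (pre : List Rec) (r : Rec) (t : Option α) : α :=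
  pre.foldr (fun x acc => H (pair (enc x) acc)) (leafOf H pair enc r t)

/-!
Strip the outermost hash layer on both sides of a verified equation: `H` and `pair` are
injective and no encoding is a pair, so the outermost record of the recomputed digest is
the chain head. When `r` is not the head, that record must come from the included prefix,
and being the newest record of key `k` it is strictly fresher than `r`.
-/

theorem eq_of_leafOf_eq_node {α : Type*} {H : α → α} {pair : α → α → α} {enc : Rec → α}
    (hH : Function.Injective H) (henc : Function.Injective enc)
    (hpair : Function.Injective2 pair) (hsep : ∀ (x : Rec) (a b : α), enc x ≠ pair a b)
    {r a : Rec} {t : Option α} {d : α} (h : leafOf H pair enc r t = H (pair (enc a) d)) :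
    r = a := by
  cases t with
  | none => exact absurd (hH h) (hsep r _ _)
  | some td => exact henc (hpair (hH h)).1

theorem mem_or_eq_of_verifyChain_eq_node {α : Type*} {H : α → α} {pair : α → α → α}
    {enc : Rec → α} (hH : Function.Injective H) (henc : Function.Injective enc)
    (hpair : Function.Injective2 pair) (hsep : ∀ (x : Rec) (a b : α), enc x ≠ pair a b)
    {pre : List Rec} {r a : Rec} {t : Option α} {d : α}
    (h : verifyChain H pair enc pre r t = H (pair (enc a) d)) :
    a ∈ pre ∨ r = a := by
  cases pre with
  | nil => exact .inr (eq_of_leafOf_eq_node hH henc hpair hsep h)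
  | cons x pre =>
    left
    have hxa : x = a := henc (hpair (hH h)).1
    exact hxa ▸ List.mem_cons_self

theorem chainHash_cons_of_ne_nil (H : α → α) (pair : α → α → α) (enc : Rec → α) (a : Rec)
    {tail : List Rec} (htail : tail ≠ []) :
    chainHash H pair enc (a :: tail) = H (pair (enc a) (chainHash H pair enc tail)) := by
  obtain ⟨b, rest, rfl⟩ := List.exists_cons_of_ne_nil htail
  rfl

theorem chain_membership_exposes_fresher_general
    (H : α → α) (pair : α → α → α) (enc : Rec → α)
    (hH : Function.Injective H) (henc : Function.Injective enc)
    (hpair : Function.Injective2 pair)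
    (hsep : ∀ (x : Rec) (a b : α), enc x ≠ pair a b)
    (k : ℕ) (c : List Rec)
    (hkeys : ∀ r ∈ c, r.1 = k)
    (hts : c.Pairwise (fun a b => b.2.2 < a.2.2))
    (r : Rec) (hr : r ∈ c) (hnothead : r ≠ c.headD default)
    (pre : List Rec) (t : Option α)
    (hver : verifyChain H pair enc pre r t = chainHash H pair enc c) :
    ∃ r' ∈ pre, r'.1 = k ∧ r.2.2 < r'.2.2 := by
  obtain ⟨a, tail, rfl⟩ := List.exists_cons_of_ne_nil (List.ne_nil_of_mem hr)
  have hra : r ≠ a := hnothead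
  have hrtail : r ∈ tail := (List.mem_cons.1 hr).resolve_left hra
  rw [chainHash_cons_of_ne_nil H pair enc a (List.ne_nil_of_mem hrtail)] at hver
  have hapre : a ∈ pre :=
    (mem_or_eq_of_verifyChain_eq_node hH henc hpair hsep hver).resolve_right hra
  exact ⟨a, hapre, hkeys a List.mem_cons_self, List.rel_of_pairwise_cons hts hrtail⟩

/-- Freshness within a level's hash chain: if the chain `c` of key `k` is
ordered with strictly decreasing timestamps (its head is the newest same-key
record at the level), a membership proof for a record `r ∈ c` that verifies
against the chain digest, where `r` is not the chain head, must expose in its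
included records `pre` a record of key `k` with a strictly larger timestamp
than `r` — assuming no hash collisions and injective encodings. -/
theorem chain_membership_exposes_fresher
    (H : α → α) (pair : α → α → α) (enc : Rec → α)
    (hH : Function.Injective H) (henc : Function.Injective enc)
    (hpair : Function.Injective2 pair)
    (hsep : ∀ (x : Rec) (a b : α), enc x ≠ pair a b)
    (k : ℕ) (c : List Rec) (hne : c ≠ [])
    (hkeys : ∀ r ∈ c, r.1 = k)
    (hts : c.Pairwise (fun a b => b.2.2 < a.2.2))
    (r : Rec) (hr : r ∈ c) (hnothead : r ≠ c.headD default)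
    (pre : List Rec) (t : Option α)
    (hver : verifyChain H pair enc pre r t = chainHash H pair enc c) :
    ∃ r' ∈ pre, r'.1 = k ∧ r.2.2 < r'.2.2 :=
  chain_membership_exposes_fresher_general H pair enc hH henc hpair hsep k c hkeys hts r hr hnothead
    pre t hver

end
end

section
/- An incrementally built Merkle root over a stream of records equals the Merkle root of the batch construction: processing records one at a time while maintaining at most one pending subtree root per height yields the same root hash as building the tree over the full list at once. -/
/-- Push a (height, digest) entry onto the stack of pending subtree roots,
repeatedly combining two entries of equal height `h` into one of height
`h + 1` (the deeper stack entry is the left sibling). -/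
def streamPush {α : Type*} (H : α → α) (pair : α → α → α) :
    List (ℕ × α) → ℕ × α → List (ℕ × α)
  | [], e => [e]
  | (h, c) :: rest, e =>
      if h = e.1 then streamPush H pair rest (h + 1, H (pair c e.2))
      else e :: (h, c) :: rest

/-- The streaming Merkle construction: process leaves one at a time,
maintaining at most one pending subtree root per height. -/
def streamMerkle {α : Type*} (H : α → α) (pair : α → α → α)
    (l : List α) : List (ℕ × α) :=
  l.foldl (fun st leaf => streamPush H pair st (0, H leaf)) []

lemma streamPush_ne {α : Type*} (H : α → α) (pair : α → α → α)
    (st : List (ℕ × α)) (e : ℕ × α)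
    (h : ∀ x ∈ st.head?, x.1 ≠ e.1) :
    streamPush H pair st e = e :: st := by
  cases st with
  | nil => rfl
  | cons a rest =>
    obtain ⟨ha, ca⟩ := a
    have := h (ha, ca) (by simp)
    simp [streamPush, this]

lemma stream_block {α : Type*} [Inhabited α]
    (H : α → α) (pair : α → α → α) :
    ∀ (d : ℕ) (l : List α) (st : List (ℕ × α)),
      l.length = 2 ^ d → (∀ x ∈ st.head?, d ≤ x.1) →
      l.foldl (fun st leaf => streamPush H pair st (0, H leaf)) st
        = streamPush H pair st (d, merkleRoot H pair d l) := by
  intro d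
  induction d with
  | zero =>
    intro l st hlen _
    rw [pow_zero, List.length_eq_one_iff] at hlen
    obtain ⟨a, rfl⟩ := hlen
    simp [merkleRoot]
  | succ d ih =>
    intro l st hlen hst
    have h1 : (l.take (2 ^ d)).length = 2 ^ d := by
      rw [List.length_take, hlen, pow_succ]
      omega
    have h2 : (l.drop (2 ^ d)).length = 2 ^ d := by
      rw [List.length_drop, hlen]
      rw [pow_succ]
      omega
    have hsplit : l = l.take (2 ^ d) ++ l.drop (2 ^ d) := (List.take_append_drop _ _).symm
    conv_lhs => rw [hsplit]
    rw [List.foldl_append]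
    rw [ih _ st h1 (fun x hx => le_trans (Nat.le_succ d) (hst x hx))]
    rw [streamPush_ne _ _ _ _ (fun x hx => by have := hst x hx; omega)]
    rw [ih _ _ h2 (by simp)]
    have : streamPush H pair ((d, merkleRoot H pair d (l.take (2 ^ d))) :: st)
        (d, merkleRoot H pair d (l.drop (2 ^ d)))
        = streamPush H pair st (d + 1,
            H (pair (merkleRoot H pair d (l.take (2 ^ d)))
                    (merkleRoot H pair d (l.drop (2 ^ d))))) := by
      simp [streamPush]
    rw [this]
    rfl

/-- After processing all `2^d` leaves, the streaming construction leaves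
exactly one pending root, and it equals the batch Merkle root. -/
theorem stream_merkle_eq_batch {α : Type*} [Inhabited α]
    (H : α → α) (pair : α → α → α) (d : ℕ) (l : List α)
    (hlen : l.length = 2 ^ d) :
    streamMerkle H pair l = [(d, merkleRoot H pair d l)] := by
  rw [streamMerkle, stream_block H pair d l [] hlen (by simp)]
  rfl
end

section
/- Tombstone semantics are correct under compaction: if a delete writes a tombstone record with the current (maximal) timestamp, then after any sequence of compactions that, when merging, drops all records of a key older than a tombstone together with the tombstone itself (when merging into the last level), the early-stop read of that key returns 'no record' exactly when the latest operation on the key was a delete. -/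
/-- A record: (key, optional value, timestamp); `none` denotes a tombstone. -/
abbrev TRec := ℕ × Option ℕ × ℕ

/-- A state: the levels, the timestamp counter, and the log of all operations
performed so far (each recorded as the record it wrote). -/
abbrev TState := (ℕ → Multiset TRec) × ℕ × List TRec

/- Purge for a merge into the last level: for each key whose freshest record
in the merged multiset `M` is a tombstone, drop the tombstone together with
all same-key records (all of which have smaller timestamps). -/
open Classical in

noncomputable def purge (M : Multiset TRec) : Multiset TRec :=
  M.filter (fun r =>
    ¬ ∃ t ∈ M, t.1 = r.1 ∧ t.2.1 = none ∧
        ∀ r' ∈ M, r'.1 = r.1 → r'.2.2 ≤ t.2.2)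

/-- Transitions (with `q` the index of the last level): writes and deletes
enter level 0 with strictly increasing timestamps and are recorded in the log;
a compaction of levels `i, i+1` below the last level merges them plainly; a
compaction into the last level `q` additionally purges tombstoned keys. -/
inductive TStep (q : ℕ) : TState → TState → Prop
  | write (s : TState) (k v : ℕ) :
      TStep q s (fun j => if j = 0 then (k, some v, s.2.1) ::ₘ s.1 j else s.1 j,
        s.2.1 + 1, (k, some v, s.2.1) :: s.2.2)
  | delete (s : TState) (k : ℕ) :
      TStep q s (fun j => if j = 0 then (k, none, s.2.1) ::ₘ s.1 j else s.1 j,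
        s.2.1 + 1, (k, none, s.2.1) :: s.2.2)
  | compact (s : TState) (i : ℕ) (hi : i + 1 < q) :
      TStep q s (fun j => if j = i then 0
        else if j = i + 1 then s.1 i + s.1 (i + 1) else s.1 j, s.2.1, s.2.2)
  | compactLast (s : TState) (i : ℕ) (hi : i + 1 = q) :
      TStep q s (fun j => if j = i then 0
        else if j = i + 1 then purge (s.1 i + s.1 (i + 1)) else s.1 j,
        s.2.1, s.2.2)

def TReachable (q : ℕ) (s : TState) : Prop :=
  Relation.ReflTransGen (TStep q) (fun _ => (0 : Multiset TRec), 0, []) s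

/-- The invariant maintained by all transitions. -/
def LsmInv (q : ℕ) (s : TState) : Prop :=
  (∀ i, ∀ r ∈ s.1 i, r ∈ s.2.2) ∧
  (∀ r ∈ s.2.2, r.2.2 < s.2.1) ∧
  (∀ r ∈ s.2.2, ∀ r' ∈ s.2.2, r.2.2 = r'.2.2 → r = r') ∧
  (∀ j j', j < j' → ∀ r ∈ s.1 j, ∀ r' ∈ s.1 j', r.1 = r'.1 → r'.2.2 < r.2.2) ∧
  (∀ j, q < j → s.1 j = 0) ∧
  (∀ r ∈ s.2.2, (∀ r' ∈ s.2.2, r'.1 = r.1 → r'.2.2 ≤ r.2.2) →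
    ((∃ i, r ∈ s.1 i) ∨ (r.2.1 = none ∧ ∀ i, ∀ t ∈ s.1 i, t.1 ≠ r.1)))

open Classical in
lemma mem_purge {M : Multiset TRec} {r : TRec} :
    r ∈ purge M ↔ r ∈ M ∧ ¬ ∃ t ∈ M, t.1 = r.1 ∧ t.2.1 = none ∧
      ∀ r' ∈ M, r'.1 = r.1 → r'.2.2 ≤ t.2.2 := by
  simp only [purge, Multiset.mem_filter]

lemma Inv_put (q : ℕ) (s : TState) (h : LsmInv q s) (k : ℕ) (v : Option ℕ) :
    LsmInv q (fun j => if j = 0 then (k, v, s.2.1) ::ₘ s.1 j else s.1 j,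
      s.2.1 + 1, (k, v, s.2.1) :: s.2.2) := by
  obtain ⟨hsub, hlt, hinj, hlev, hhi, hfresh⟩ := h
  set w : TRec := (k, v, s.2.1) with hw
  refine ⟨?_, ?_, ?_, ?_, ?_, ?_⟩
  · intro i r hr
    simp only at hr
    by_cases hi : i = 0
    · rw [hi] at hr; rw [if_pos rfl, Multiset.mem_cons] at hr
      rcases hr with h | h
      · exact h ▸ List.mem_cons_self
      · exact List.mem_cons_of_mem _ (hsub 0 r h)
    · rw [if_neg hi] at hr; exact List.mem_cons_of_mem _ (hsub i r hr)
  · intro r hr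
    rcases List.mem_cons.1 hr with h | h
    · subst h; exact Nat.lt_succ_self _
    · exact Nat.lt_succ_of_lt (hlt r h)
  · intro r hr r' hr' hts
    rcases List.mem_cons.1 hr with h | h <;> rcases List.mem_cons.1 hr' with h' | h'
    · rw [h, h']
    · rw [h] at hts; exact absurd hts (Nat.ne_of_gt (hlt r' h'))
    · rw [h'] at hts; exact absurd hts.symm (Nat.ne_of_gt (hlt r h))
    · exact hinj r h r' h' hts
  · intro j j' hjj r hr r' hr' hk
    simp only at hr hr'
    have hj' : j' ≠ 0 := by omega
    rw [if_neg hj'] at hr'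
    by_cases hj : j = 0
    · subst hj; rw [if_pos rfl, Multiset.mem_cons] at hr
      rcases hr with h | h
      · exact h ▸ hlt r' (hsub j' r' hr')
      · exact hlev 0 j' hjj r h r' hr' hk
    · rw [if_neg hj] at hr; exact hlev j j' hjj r hr r' hr' hk
  · intro j hj
    have : j ≠ 0 := by omega
    simp only [if_neg this]
    exact hhi j hj
  · intro r hr hmax
    rcases List.mem_cons.1 hr with h | h
    · left; exact ⟨0, by simp [h]⟩
    · have hk : r.1 ≠ k := by
        intro hrk
        have := hmax w (List.mem_cons_self) (by simp [hw, hrk])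
        exact absurd this (Nat.not_le.2 (hlt r h))
      have hmax' : ∀ r' ∈ s.2.2, r'.1 = r.1 → r'.2.2 ≤ r.2.2 := fun r' h' =>
        hmax r' (List.mem_cons_of_mem _ h')
      rcases hfresh r h hmax' with ⟨i, hi⟩ | ⟨hn, hno⟩
      · left; refine ⟨i, ?_⟩
        show r ∈ (if i = 0 then w ::ₘ s.1 i else s.1 i)
        by_cases hi0 : i = 0
        · rw [if_pos hi0]; exact Multiset.mem_cons_of_mem hi
        · rw [if_neg hi0]; exact hi
      · right; refine ⟨hn, fun i t ht => ?_⟩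
        simp only at ht
        by_cases hi0 : i = 0
        · subst hi0; rw [if_pos rfl, Multiset.mem_cons] at ht
          rcases ht with h' | h'
          · rw [h']; exact fun hc => hk hc.symm
          · exact hno 0 t h'
        · rw [if_neg hi0] at ht; exact hno i t ht

lemma Inv_step {q : ℕ} {s s' : TState} (h : LsmInv q s) (hst : TStep q s s') :
    LsmInv q s' := by
  cases hst with
  | write k v => exact Inv_put q s h k (some v)
  | delete k => exact Inv_put q s h k none
  | compact i hi =>
    obtain ⟨hsub, hlt, hinj, hlev, hhi, hfresh⟩ := h
    -- membership characterization
    have hmem : ∀ r : TRec, (∃ j, r ∈ (fun j => if j = i then 0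
        else if j = i + 1 then s.1 i + s.1 (i + 1) else s.1 j) j) ↔ (∃ j, r ∈ s.1 j) := by
      intro r
      constructor
      · rintro ⟨j, hj⟩
        simp only at hj
        by_cases h1 : j = i
        · rw [h1] at hj; simp at hj
        · rw [if_neg h1] at hj
          by_cases h2 : j = i + 1
          · rw [if_pos h2, Multiset.mem_add] at hj
            rcases hj with h | h
            exacts [⟨i, h⟩, ⟨i + 1, h⟩]
          · rw [if_neg h2] at hj; exact ⟨j, hj⟩
      · rintro ⟨j, hj⟩
        by_cases h1 : j = i
        · refine ⟨i + 1, ?_⟩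
          show r ∈ (if i + 1 = i then 0
            else if i + 1 = i + 1 then s.1 i + s.1 (i + 1) else s.1 (i + 1))
          rw [if_neg (Nat.succ_ne_self i), if_pos rfl, Multiset.mem_add]
          exact Or.inl (h1 ▸ hj)
        · by_cases h2 : j = i + 1
          · refine ⟨i + 1, ?_⟩
            show r ∈ (if i + 1 = i then 0
              else if i + 1 = i + 1 then s.1 i + s.1 (i + 1) else s.1 (i + 1))
            rw [if_neg (Nat.succ_ne_self i), if_pos rfl, Multiset.mem_add]
            exact Or.inr (h2 ▸ hj)
          · refine ⟨j, ?_⟩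
            show r ∈ (if j = i then 0
              else if j = i + 1 then s.1 i + s.1 (i + 1) else s.1 j)
            rw [if_neg h1, if_neg h2]; exact hj
    refine ⟨?_, hlt, hinj, ?_, ?_, ?_⟩
    · intro j r hr
      obtain ⟨j', hj'⟩ := (hmem r).1 ⟨j, hr⟩
      exact hsub j' r hj'
    · intro j j' hjj r hr r' hr' hk
      simp only at hr hr'
      -- locate true levels
      have key : ∀ a (t : TRec), t ∈ (if a = i then 0
          else if a = i + 1 then s.1 i + s.1 (i + 1) else s.1 a) →
          ∃ b, b ≤ a ∧ (b = a ∨ (a = i + 1 ∧ b = i)) ∧ t ∈ s.1 b := by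
        intro a t ht
        by_cases h1 : a = i
        · rw [if_pos h1] at ht; simp at ht
        · rw [if_neg h1] at ht
          by_cases h2 : a = i + 1
          · rw [if_pos h2, Multiset.mem_add] at ht
            rcases ht with h | h
            · exact ⟨i, by omega, Or.inr ⟨h2, rfl⟩, h⟩
            · exact ⟨a, le_refl a, Or.inl rfl, h2 ▸ h⟩
          · rw [if_neg h2] at ht; exact ⟨a, le_refl a, Or.inl rfl, ht⟩
      obtain ⟨b, hb, hbs, hrb⟩ := key j r hr
      obtain ⟨b', hb', hbs', hrb'⟩ := key j' r' hr'
      have hji : j ≠ i := by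
        intro hji; rw [hji] at hr; simp at hr
      have : b < b' := by
        rcases hbs' with h | ⟨h1, h2⟩
        · omega
        · omega
      exact hlev b b' this r hrb r' hrb' hk
    · intro j hj
      have h1 : j ≠ i := by omega
      have h2 : j ≠ i + 1 := by omega
      simp only [if_neg h1, if_neg h2]
      exact hhi j hj
    · intro r hr hmax
      rcases hfresh r hr hmax with hin | ⟨hn, hno⟩
      · left; exact (hmem r).2 hin
      · right
        refine ⟨hn, fun j t ht => ?_⟩
        obtain ⟨j', hj'⟩ := (hmem t).1 ⟨j, ht⟩
        exact hno j' t hj'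
  | compactLast i hi =>
    obtain ⟨hsub, hlt, hinj, hlev, hhi, hfresh⟩ := h
    set M := s.1 i + s.1 (i + 1) with hM
    have hpsub : ∀ r ∈ purge M, r ∈ M := fun r hr => (mem_purge.1 hr).1
    have hMsub : ∀ r ∈ M, r ∈ s.2.2 := by
      intro r hr
      rw [hM, Multiset.mem_add] at hr
      rcases hr with h | h
      exacts [hsub i r h, hsub (i+1) r h]
    -- new tree membership implies old tree membership
    have hmem1 : ∀ r : TRec, ∀ j, r ∈ (if j = i then (0 : Multiset TRec)
        else if j = i + 1 then purge M else s.1 j) → ∃ b, r ∈ s.1 b := by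
      intro r j hj
      by_cases h1 : j = i
      · rw [if_pos h1] at hj; simp at hj
      · rw [if_neg h1] at hj
        by_cases h2 : j = i + 1
        · rw [if_pos h2] at hj
          have := hpsub r hj
          rw [hM, Multiset.mem_add] at this
          rcases this with h | h
          exacts [⟨i, h⟩, ⟨i+1, h⟩]
        · rw [if_neg h2] at hj; exact ⟨j, hj⟩
    refine ⟨?_, hlt, hinj, ?_, ?_, ?_⟩
    · intro j r hr
      obtain ⟨b, hb⟩ := hmem1 r j hr
      exact hsub b r hb
    · intro j j' hjj r hr r' hr' hk
      simp only at hr hr'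
      have key : ∀ a (t : TRec), t ∈ (if a = i then (0 : Multiset TRec)
          else if a = i + 1 then purge M else s.1 a) →
          ∃ b, (b = a ∨ (a = i + 1 ∧ b = i)) ∧ t ∈ s.1 b := by
        intro a t ht
        by_cases h1 : a = i
        · rw [if_pos h1] at ht; simp at ht
        · rw [if_neg h1] at ht
          by_cases h2 : a = i + 1
          · rw [if_pos h2] at ht
            have := hpsub t ht
            rw [hM, Multiset.mem_add] at this
            rcases this with h | h
            · exact ⟨i, Or.inr ⟨h2, rfl⟩, h⟩
            · exact ⟨a, Or.inl rfl, h2 ▸ h⟩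
          · rw [if_neg h2] at ht; exact ⟨a, Or.inl rfl, ht⟩
      obtain ⟨b, hbs, hrb⟩ := key j r hr
      obtain ⟨b', hbs', hrb'⟩ := key j' r' hr'
      have hji : j ≠ i := by
        intro hji; rw [hji] at hr; simp at hr
      have : b < b' := by omega
      exact hlev b b' this r hrb r' hrb' hk
    · intro j hj
      have h1 : j ≠ i := by omega
      have h2 : j ≠ i + 1 := by omega
      simp only [if_neg h1, if_neg h2]
      exact hhi j hj
    · intro r hr hmax
      -- r dominates all same-key records in M
      have hdom : ∀ r'' ∈ M, r''.1 = r.1 → r''.2.2 ≤ r.2.2 := fun r'' h'' =>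
        hmax r'' (hMsub r'' h'')
      rcases hfresh r hr hmax with ⟨j, hj⟩ | ⟨hn, hno⟩
      · -- r is somewhere in the old tree
        by_cases hcase : j = i ∨ j = i + 1
        · -- r ∈ M
          have hrM : r ∈ M := by
            rw [hM, Multiset.mem_add]
            rcases hcase with h | h
            exacts [Or.inl (h ▸ hj), Or.inr (h ▸ hj)]
          by_cases hsurv : r ∈ purge M
          · left
            refine ⟨i + 1, ?_⟩
            show r ∈ (if i + 1 = i then 0
              else if i + 1 = i + 1 then purge M else s.1 (i + 1))
            rw [if_neg (Nat.succ_ne_self i), if_pos rfl]; exact hsurv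
          · -- r was purged, so r itself must be the dominating tombstone
            have : ¬ (¬ ∃ t ∈ M, t.1 = r.1 ∧ t.2.1 = none ∧
                ∀ r' ∈ M, r'.1 = r.1 → r'.2.2 ≤ t.2.2) := by
              intro hc
              exact hsurv (mem_purge.2 ⟨hrM, hc⟩)
            push_neg at this
            obtain ⟨t, htM, htk, htn, htdom⟩ := this
            have h1 : t.2.2 ≤ r.2.2 := hmax t (hMsub t htM) htk
            have h2 : r.2.2 ≤ t.2.2 := htdom r hrM rfl
            have hteq : t = r := hinj t (hMsub t htM) r hr (le_antisymm h1 h2)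
            right
            refine ⟨hteq ▸ htn, fun j' u hu => ?_⟩
            intro huk
            simp only at hu
            by_cases hj1 : j' = i
            · rw [hj1] at hu; simp at hu
            · rw [if_neg hj1] at hu
              by_cases hj2 : j' = i + 1
              · rw [if_pos hj2] at hu
                have : ¬ ∃ t ∈ M, t.1 = u.1 ∧ t.2.1 = none ∧
                    ∀ r' ∈ M, r'.1 = u.1 → r'.2.2 ≤ t.2.2 :=
                  (mem_purge.1 hu).2
                exact this ⟨r, hrM, by rw [huk], hteq ▸ htn,
                  fun r' h' hk' => hdom r' h' (huk ▸ hk')⟩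
              · rw [if_neg hj2] at hu
                -- u is at a level j' ∉ {i, i+1}; j' < i or j' > i+1 = q
                by_cases hlt' : j' < i
                · -- then u is strictly fresher than r: contradiction with hmax
                  have hrlev : r ∈ s.1 i ∨ r ∈ s.1 (i+1) := by
                    rcases hcase with h | h
                    exacts [Or.inl (h ▸ hj), Or.inr (h ▸ hj)]
                  have : r.2.2 < u.2.2 := by
                    rcases hrlev with h | h
                    · exact hlev j' i hlt' u hu r h (by rw [huk])
                    · exact hlev j' (i+1) (by omega) u hu r h (by rw [huk])
                  have : u.2.2 ≤ r.2.2 := hmax u (hsub j' u hu) huk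
                  omega
                · have : q < j' := by omega
                  rw [hhi j' this] at hu
                  simp at hu
        · -- r stays at level j
          push_neg at hcase
          left
          exact ⟨j, by simp only [if_neg hcase.1, if_neg hcase.2]; exact hj⟩
      · right
        refine ⟨hn, fun j t ht => ?_⟩
        obtain ⟨b, hb⟩ := hmem1 t j ht
        exact hno b t hb

lemma Inv_reachable {q : ℕ} {s : TState} (hs : TReachable q s) : LsmInv q s := by
  induction hs with
  | refl =>
    refine ⟨?_, ?_, ?_, ?_, ?_, ?_⟩ <;> simp [LsmInv]
  | tail _ hstep ih => exact Inv_step ih hstep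

lemma exists_max_rec (k : ℕ) (l : List TRec) (h : ∃ r ∈ l, r.1 = k) :
    ∃ m ∈ l, m.1 = k ∧ ∀ r ∈ l, r.1 = k → r.2.2 ≤ m.2.2 := by
  induction l with
  | nil => simp at h
  | cons a t ih =>
    by_cases hak : a.1 = k
    · by_cases ht : ∃ r ∈ t, r.1 = k
      · obtain ⟨m, hm, hmk, hmax⟩ := ih ht
        by_cases hle : a.2.2 ≤ m.2.2
        · refine ⟨m, List.mem_cons_of_mem _ hm, hmk, fun r hr hrk => ?_⟩
          rcases List.mem_cons.1 hr with h' | h'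
          · exact h' ▸ hle
          · exact hmax r h' hrk
        · refine ⟨a, List.mem_cons_self, hak, fun r hr hrk => ?_⟩
          rcases List.mem_cons.1 hr with h' | h'
          · exact h' ▸ le_refl _
          · exact le_trans (hmax r h' hrk) (le_of_not_ge hle)
      · refine ⟨a, List.mem_cons_self, hak, fun r hr hrk => ?_⟩
        rcases List.mem_cons.1 hr with h' | h'
        · exact h' ▸ le_refl _
        · exact absurd ⟨r, h', hrk⟩ ht
    · obtain ⟨r, hr, hrk⟩ := h
      have hrt : r ∈ t := by
        rcases List.mem_cons.1 hr with h' | h'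
        · exact absurd (h' ▸ hrk) hak
        · exact h'
      obtain ⟨m, hm, hmk, hmax⟩ := ih ⟨r, hrt, hrk⟩
      refine ⟨m, List.mem_cons_of_mem _ hm, hmk, fun r' hr' hrk' => ?_⟩
      rcases List.mem_cons.1 hr' with h' | h'
      · exact absurd (h' ▸ hrk') hak
      · exact hmax r' h' hrk'

/-- Correctness of tombstone semantics under compaction: the early-stop read
of key `k` returns 'no record' (no record of key `k` remains in the tree, or
the freshest remaining one is a tombstone) exactly when no operation on `k`
ever occurred or the operation on `k` with the maximal timestamp was a
delete. -/
theorem tombstone_read_correct (q : ℕ) (s : TState)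
    (hs : TReachable q s) (k : ℕ) :
    ((∀ i, ∀ r ∈ s.1 i, r.1 ≠ k) ∨
      (∃ r : TRec, (∃ i, r ∈ s.1 i) ∧ r.1 = k ∧ r.2.1 = none ∧
        ∀ i, ∀ r' ∈ s.1 i, r'.1 = k → r'.2.2 ≤ r.2.2))
    ↔
    ((∀ r ∈ s.2.2, r.1 ≠ k) ∨
      (∃ r ∈ s.2.2, r.1 = k ∧ r.2.1 = none ∧
        ∀ r' ∈ s.2.2, r'.1 = k → r'.2.2 ≤ r.2.2)) := by
  obtain ⟨hsub, hlt, hinj, hlev, hhi, hfresh⟩ := Inv_reachable hs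
  constructor
  · rintro (hnone | ⟨r, ⟨i, hri⟩, hrk, hrn, hrmax⟩)
    · -- no record of k in the tree
      by_cases hlog : ∃ r ∈ s.2.2, r.1 = k
      · obtain ⟨m, hm, hmk, hmax⟩ := exists_max_rec k s.2.2 hlog
        rcases hfresh m hm (fun r' h' hk' => hmax r' h' (hk' ▸ hmk)) with ⟨i, hi⟩ | ⟨hn, _⟩
        · exact absurd hmk (hnone i m hi)
        · exact Or.inr ⟨m, hm, hmk, hn, hmax⟩
      · push_neg at hlog
        exact Or.inl hlog
    · -- freshest tree record of k is a tombstone r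
      have hrlog : r ∈ s.2.2 := hsub i r hri
      obtain ⟨m, hm, hmk, hmax⟩ := exists_max_rec k s.2.2 ⟨r, hrlog, hrk⟩
      rcases hfresh m hm (fun r' h' hk' => hmax r' h' (hk' ▸ hmk)) with ⟨j, hj⟩ | ⟨hn, _⟩
      · have h1 : m.2.2 ≤ r.2.2 := hrmax j m hj hmk
        have h2 : r.2.2 ≤ m.2.2 := hmax r hrlog hrk
        have : m = r := hinj m hm r hrlog (le_antisymm h1 h2)
        exact Or.inr ⟨m, hm, hmk, this ▸ hrn, hmax⟩
      · exact Or.inr ⟨m, hm, hmk, hn, hmax⟩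
  · rintro (hnone | ⟨r, hr, hrk, hrn, hrmax⟩)
    · exact Or.inl (fun i r hri => hnone r (hsub i r hri))
    · rcases hfresh r hr (fun r' h' hk' => hrmax r' h' (hk' ▸ hrk)) with ⟨j, hj⟩ | ⟨_, hno⟩
      · exact Or.inr ⟨r, ⟨j, hj⟩, hrk, hrn,
          fun i r' h' hk' => hrmax r' (hsub i r' h') hk'⟩
      · exact Or.inl (fun i t ht hc => hno i t ht (hc ▸ hrk ▸ rfl))
end
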